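/- Let K be a field of characteristic 0 and φ ∈ K(x) a nonconstant rational function with φ' = p/q for coprime p, q ∈ K[x]. Suppose the n-th dynatomic polynomial Φ_n of φ has nonzero discriminant, ∞ is not n-periodic for φ, and Φ_n has leading coefficient ℓ. Then U_n(φ) := (Res(Φ_n, p)/Res(Φ_n, q)) · ℓ^{deg q − deg p} equals the product of the multipliers of all n-cycles of φ. In particular, U_n(φ) = 0 if and only if φ has an n-periodic critical point in ℙ¹(K̄). -/

import Mathlib

/-!
Over `K̄` the polynomial `Φ` is separable and splits, so the resultant factors over its roots,
`Res(Φ, g) = ℓ ^ deg g · ∏_{Φ(β) = 0} g(β)`. The powers of `ℓ` cancel and `U` becomes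
`∏_{Φ(β) = 0} p(β) / q(β)`, the product of `φ'` over all points of exact period `n`. These points
fall into `n`-cycles, and regrouping the product along the cycles gives the product of the
multipliers. Since `p` and `q` are coprime, `p * Q² = q * _` forces `q ∣ Q²`, and orbits of
periodic points avoid the poles of `φ`; so no factor has a zero denominator, and `U = 0` exactly
when `p` vanishes at a periodic point.
-/

noncomputable section
open Polynomial

/-- The Sylvester matrix of two polynomials. -/
def sylvester {R : Type*} [CommRing R] (p q : R[X]) :
    Matrix (Fin (p.natDegree + q.natDegree)) (Fin (p.natDegree + q.natDegree)) R :=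
  fun i j =>
    if (i : ℕ) < q.natDegree then
      (if (i : ℕ) ≤ (j : ℕ) ∧ (j : ℕ) ≤ (i : ℕ) + p.natDegree then
        p.coeff (p.natDegree + (i : ℕ) - (j : ℕ)) else 0)
    else
      (if (i : ℕ) - q.natDegree ≤ (j : ℕ) ∧ (j : ℕ) ≤ (i : ℕ) - q.natDegree + q.natDegree then
        q.coeff (q.natDegree + ((i : ℕ) - q.natDegree) - (j : ℕ)) else 0)

/-- The resultant of two polynomials, as the determinant of their Sylvester matrix. -/
def resultant {R : Type*} [CommRing R] (p q : R[X]) : R := (_root_.sylvester p q).det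

theorem sylvester_submatrix_rev {R : Type*} [CommRing R] (p q : R[X]) :
    (_root_.sylvester p q).submatrix Fin.rev Fin.rev =
      (Polynomial.sylvester p q p.natDegree q.natDegree).transpose := by
  ext a b
  induction a using Fin.addCases with
  | left a =>
    simp only [Matrix.submatrix_apply, Matrix.transpose_apply, Polynomial.sylvester,
      Matrix.of_apply, Fin.addCases_left, _root_.sylvester, Fin.val_rev, Fin.val_castAdd,
      Set.mem_Icc]
    split_ifs <;> first | omega | (congr 1; omega) | rfl
  | right a =>
    simp only [Matrix.submatrix_apply, Matrix.transpose_apply, Polynomial.sylvester,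
      Matrix.of_apply, Fin.addCases_right, _root_.sylvester, Fin.val_rev, Fin.val_natAdd,
      Set.mem_Icc]
    split_ifs <;> first | omega | (congr 1; omega) | rfl

theorem resultant_eq_polynomial_resultant {R : Type*} [CommRing R] (p q : R[X]) :
    _root_.resultant p q = Polynomial.resultant p q := by
  rw [_root_.resultant, ← Matrix.det_submatrix_equiv_self Fin.revPerm, Polynomial.resultant,
    ← Matrix.det_transpose (Polynomial.sylvester _ _ _ _), ← sylvester_submatrix_rev]
  rfl

theorem map_resultant_eq_leadingCoeff_pow_mul_prod_roots {K L : Type*} [Field K] [Field L]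
    (ψ : K →+* L) (F g : K[X]) (hF : (F.map ψ).Splits) :
    ψ (_root_.resultant F g) =
      ψ F.leadingCoeff ^ g.natDegree * ((F.map ψ).roots.map (g.map ψ).eval).prod := by
  have h := resultant_eq_prod_eval (F.map ψ) (g.map ψ) g.natDegree natDegree_map_le hF
  rw [natDegree_map, resultant_map_map, leadingCoeff_map] at h
  rw [resultant_eq_polynomial_resultant]
  exact h

theorem map_resultant_div_resultant_mul_zpow {K L : Type*} [Field K] [Field L]
    (ψ : K →+* L) (F g h : K[X]) (hF0 : F ≠ 0) (hF : (F.map ψ).Splits) :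
    ψ (_root_.resultant F g / _root_.resultant F h *
        F.leadingCoeff ^ ((h.natDegree : ℤ) - g.natDegree)) =
      ((F.map ψ).roots.map fun x => (g.map ψ).eval x / (h.map ψ).eval x).prod := by
  have hc : ψ F.leadingCoeff ≠ 0 := (map_ne_zero ψ).mpr (leadingCoeff_ne_zero.mpr hF0)
  rw [map_mul, map_div₀, map_zpow₀, map_resultant_eq_leadingCoeff_pow_mul_prod_roots ψ F g hF,
    map_resultant_eq_leadingCoeff_pow_mul_prod_roots ψ F h hF, Multiset.prod_map_div,
    zpow_sub₀ hc, zpow_natCast, zpow_natCast]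
  field_simp

namespace Function

variable {α : Type*} {f : α → α} {n : ℕ}

theorem minimalPeriod_eq_iff_of_pos (hn : 0 < n) {x : α} :
    minimalPeriod f x = n ↔ f^[n] x = x ∧ ∀ m, 0 < m → m < n → f^[m] x ≠ x := by
  constructor
  · rintro rfl
    exact ⟨iterate_minimalPeriod, fun m hm hmn =>
      not_isPeriodicPt_of_pos_of_lt_minimalPeriod hm.ne' hmn⟩
  · rintro ⟨hx, hmin⟩
    refine le_antisymm (IsPeriodicPt.minimalPeriod_le hn hx) (not_lt.mp fun hlt => ?_)
    exact hmin _ (IsPeriodicPt.minimalPeriod_pos hn hx) hlt iterate_minimalPeriod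

theorem IsPeriodicPt.prod_range_iterate_succ {M : Type*} [CommMonoid M] {x : α}
    (hx : IsPeriodicPt f n x) (g : α → M) :
    ∏ i ∈ Finset.range n, g (f^[i + 1] x) = ∏ i ∈ Finset.range n, g (f^[i] x) := by
  cases n with
  | zero => rfl
  | succ k => rw [Finset.prod_range_succ, Finset.prod_range_succ' _ k, hx.eq, iterate_zero_apply]

theorem mapsTo_of_forall_mem_iff_minimalPeriod_eq {S : Set α} {P : α → Prop} (hn : 0 < n)
    (hS : ∀ x, x ∈ S ↔ (∀ i, P (f^[i] x)) ∧ minimalPeriod f x = n) :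
    Set.MapsTo f S S := by
  intro x hx
  obtain ⟨hP, hper⟩ := (hS x).mp hx
  refine (hS (f x)).mpr ⟨fun i => ?_, ?_⟩
  · rw [← iterate_succ_apply]
    exact hP (i + 1)
  · rw [minimalPeriod_apply (minimalPeriod_pos_iff_mem_periodicPts.mp (hper ▸ hn)), hper]

theorem prod_eq_prod_prod_iterate_of_minimalPeriod_eq {M : Type*} [CommMonoid M]
    {S R : Finset α} (hper : ∀ x ∈ S, minimalPeriod f x = n) (hmaps : Set.MapsTo f S S)
    (hRS : R ⊆ S) (hdisj : ∀ x ∈ R, ∀ y ∈ R, (∃ i < n, f^[i] x = y) → x = y)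
    (hcover : ∀ y ∈ S, ∃ x ∈ R, ∃ i < n, f^[i] x = y) (g : α → M) :
    ∏ y ∈ S, g y = ∏ x ∈ R, ∏ i ∈ Finset.range n, g (f^[i] x) := by
  rw [← Finset.prod_product']
  symm
  refine Finset.prod_bij (fun a _ => f^[a.2] a.1) ?_ ?_ ?_ fun _ _ => rfl
  · rintro ⟨x, i⟩ ha
    exact hmaps.iterate i (hRS (Finset.mem_product.mp ha).1)
  · rintro ⟨x, i⟩ ha ⟨y, j⟩ hb (hxy : f^[i] x = f^[j] y)
    simp only [Finset.mem_product, Finset.mem_range] at ha hb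
    have hx := hper x (hRS ha.1)
    -- going `n - j` more steps from `f^[j] y` returns to `y`, so `y` lies on the cycle of `x`
    have hcycle : f^[(n - j + i) % n] x = y := by
      rw [← hx, iterate_mod_minimalPeriod_eq, hx, iterate_add_apply, hxy, ← iterate_add_apply,
        Nat.sub_add_cancel hb.2.le, ← hper y (hRS hb.1), iterate_minimalPeriod]
    obtain rfl := hdisj x ha.1 y hb.1 ⟨_, Nat.mod_lt _ (by omega), hcycle⟩
    rw [(iterate_eq_iterate_iff_of_lt_minimalPeriod (hx ▸ ha.2) (hx ▸ hb.2)).mp hxy]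
  · intro y hy
    obtain ⟨x, hxR, i, hi, rfl⟩ := hcover y hy
    exact ⟨(x, i), Finset.mem_product.mpr ⟨hxR, Finset.mem_range.mpr hi⟩, rfl⟩

end Function

theorem stmt_15_general (K : Type*) [Field K]
    (P Q : K[X])
    (p q : K[X]) (hpq : IsCoprime p q)
    (hderiv : p * Q^2 = q * (derivative P * Q - P * derivative Q))
    (n : ℕ) (hn : 1 ≤ n)
    (Φ : K[X]) (hΦ0 : Φ ≠ 0) (ℓ : K) (hl : Φ.leadingCoeff = ℓ)
    (hsep : Squarefree (Φ.map (algebraMap K (AlgebraicClosure K))))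
    (f : AlgebraicClosure K → AlgebraicClosure K)
    (hroots : ∀ β : AlgebraicClosure K,
      (Φ.map (algebraMap K (AlgebraicClosure K))).eval β = 0 ↔
        ((∀ i : ℕ, (Q.map (algebraMap K (AlgebraicClosure K))).eval (f^[i] β) ≠ 0) ∧
          f^[n] β = β ∧ ∀ m : ℕ, 0 < m → m < n → f^[m] β ≠ β))
    (U : K)
    (hU : U = _root_.resultant Φ p / _root_.resultant Φ q * ℓ ^ ((q.natDegree : ℤ) - (p.natDegree : ℤ))) :
    (∀ R : Finset (AlgebraicClosure K),
      (∀ β ∈ R, (Φ.map (algebraMap K (AlgebraicClosure K))).eval β = 0) →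
      (∀ β ∈ R, ∀ γ ∈ R, (∃ i : ℕ, i < n ∧ f^[i] β = γ) → β = γ) →
      (∀ γ : AlgebraicClosure K, (Φ.map (algebraMap K (AlgebraicClosure K))).eval γ = 0 →
        ∃ β ∈ R, ∃ i : ℕ, i < n ∧ f^[i] β = γ) →
      algebraMap K (AlgebraicClosure K) U =
        ∏ β ∈ R, ∏ i ∈ Finset.range n,
          ((p.map (algebraMap K (AlgebraicClosure K))).eval (f^[i+1] β) /
           (q.map (algebraMap K (AlgebraicClosure K))).eval (f^[i+1] β))) ∧
    (U = 0 ↔ ∃ β : AlgebraicClosure K,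
      (Φ.map (algebraMap K (AlgebraicClosure K))).eval β = 0 ∧
      (p.map (algebraMap K (AlgebraicClosure K))).eval β = 0) := by
  set ψ := algebraMap K (AlgebraicClosure K)
  subst hl
  have hnodup : (Φ.map ψ).roots.Nodup :=
    nodup_roots (PerfectField.separable_iff_squarefree.mpr hsep)
  set S : Finset (AlgebraicClosure K) := ⟨_, hnodup⟩
  have hmemS (x) : x ∈ S ↔ (Φ.map ψ).eval x = 0 := mem_roots (map_ne_zero hΦ0)
  have hS (x) :
      x ∈ S ↔ (∀ i, (Q.map ψ).eval (f^[i] x) ≠ 0) ∧ Function.minimalPeriod f x = n := by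
    rw [hmemS, hroots, Function.minimalPeriod_eq_iff_of_pos hn]
  have hper (x) (hx : x ∈ S) : Function.minimalPeriod f x = n := ((hS x).mp hx).2
  have hq (x) (hx : x ∈ S) : (q.map ψ).eval x ≠ 0 := by
    obtain ⟨c, hc⟩ : q ∣ Q ^ 2 := hpq.symm.dvd_of_dvd_mul_left ⟨_, hderiv⟩
    intro hqx
    apply ((hS x).mp hx).1 0
    simpa [hqx] using congrArg (fun r => (r.map ψ).eval x) hc
  have hψU : ψ U = ∏ x ∈ S, (p.map ψ).eval x / (q.map ψ).eval x := by
    rw [hU]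
    exact map_resultant_div_resultant_mul_zpow ψ Φ p q hΦ0 (IsAlgClosed.splits _)
  refine ⟨fun R hR hdisj hcover => ?_, ?_⟩
  · have hmaps : Set.MapsTo f S S :=
      Function.mapsTo_of_forall_mem_iff_minimalPeriod_eq (P := fun y => (Q.map ψ).eval y ≠ 0) hn hS
    rw [hψU, Function.prod_eq_prod_prod_iterate_of_minimalPeriod_eq hper hmaps
      (fun x hx => (hmemS x).mpr (hR x hx)) hdisj (fun y hy => hcover y ((hmemS y).mp hy))]
    refine Finset.prod_congr rfl fun x hx => ?_
    have hx : Function.IsPeriodicPt f n x :=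
      hper x ((hmemS x).mpr (hR x hx)) ▸ Function.isPeriodicPt_minimalPeriod f x
    exact (hx.prod_range_iterate_succ fun y => (p.map ψ).eval y / (q.map ψ).eval y).symm
  · rw [← map_eq_zero ψ, hψU, Finset.prod_eq_zero_iff]
    constructor
    · rintro ⟨x, hx, hpx⟩
      exact ⟨x, (hmemS x).mp hx, (div_eq_zero_iff.mp hpx).resolve_right (hq x hx)⟩
    · rintro ⟨x, hx, hpx⟩
      exact ⟨x, (hmemS x).mpr hx, by rw [hpx, zero_div]⟩

/-- Let `φ = P/Q` be a nonconstant rational function over a field `K` of characteristic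
zero, with derivative `φ' = p/q` in lowest terms, and let `Φ` be the `n`-th dynatomic
polynomial of `φ`, assumed to have nonzero discriminant (i.e. separable over `K̄`) and
such that `∞` is not `n`-periodic, so that the roots of `Φ` in `K̄` are exactly the
points of exact period `n` of `φ` (with orbits avoiding the poles of `φ`). Then
`U_n(φ) := (Res(Φ,p)/Res(Φ,q))·ℓ^{deg q − deg p}` is the product of the multipliers of
all `n`-cycles of `φ`, and `U_n(φ) = 0` iff `φ` has an `n`-periodic critical point. -/
theorem stmt_15 (K : Type*) [Field K] [CharZero K]
    (P Q : K[X]) (hPQ : IsCoprime P Q) (hnc : 1 ≤ max P.natDegree Q.natDegree)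
    (p q : K[X]) (hpq : IsCoprime p q) (hq0 : q ≠ 0)
    (hderiv : p * Q^2 = q * (derivative P * Q - P * derivative Q))
    (n : ℕ) (hn : 1 ≤ n)
    (Φ : K[X]) (hΦ0 : Φ ≠ 0) (ℓ : K) (hl : Φ.leadingCoeff = ℓ)
    (hsep : Squarefree (Φ.map (algebraMap K (AlgebraicClosure K))))
    (f : AlgebraicClosure K → AlgebraicClosure K)
    (hf : ∀ x, f x = (P.map (algebraMap K (AlgebraicClosure K))).eval x /
      (Q.map (algebraMap K (AlgebraicClosure K))).eval x)
    (hroots : ∀ β : AlgebraicClosure K,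
      (Φ.map (algebraMap K (AlgebraicClosure K))).eval β = 0 ↔
        ((∀ i : ℕ, (Q.map (algebraMap K (AlgebraicClosure K))).eval (f^[i] β) ≠ 0) ∧
          f^[n] β = β ∧ ∀ m : ℕ, 0 < m → m < n → f^[m] β ≠ β))
    (U : K)
    (hU : U = _root_.resultant Φ p / _root_.resultant Φ q * ℓ ^ ((q.natDegree : ℤ) - (p.natDegree : ℤ))) :
    (∀ R : Finset (AlgebraicClosure K),
      (∀ β ∈ R, (Φ.map (algebraMap K (AlgebraicClosure K))).eval β = 0) →
      (∀ β ∈ R, ∀ γ ∈ R, (∃ i : ℕ, i < n ∧ f^[i] β = γ) → β = γ) →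
      (∀ γ : AlgebraicClosure K, (Φ.map (algebraMap K (AlgebraicClosure K))).eval γ = 0 →
        ∃ β ∈ R, ∃ i : ℕ, i < n ∧ f^[i] β = γ) →
      algebraMap K (AlgebraicClosure K) U =
        ∏ β ∈ R, ∏ i ∈ Finset.range n,
          ((p.map (algebraMap K (AlgebraicClosure K))).eval (f^[i+1] β) /
           (q.map (algebraMap K (AlgebraicClosure K))).eval (f^[i+1] β))) ∧
    (U = 0 ↔ ∃ β : AlgebraicClosure K,
      (Φ.map (algebraMap K (AlgebraicClosure K))).eval β = 0 ∧
      (p.map (algebraMap K (AlgebraicClosure K))).eval β = 0) :=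
  stmt_15_general K P Q p q hpq hderiv n hn Φ hΦ0 ℓ hl hsep f hroots U hU

end
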